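/- If 𝔗 generates a linear deformation T_t = T + t𝔗 of an embedding tensor T on a 3-Hom-Lie algebra, then 𝔗 itself is an embedding tensor on (L,[·,·,·],α) with respect to (V;ρ,β). -/
import Mathlib


/-- A 3-Hom-Lie algebra structure on a vector space `L` over `K`:
a trilinear skew-symmetric bracket and a linear map `α` satisfying
multiplicativity and the Hom-Filippov-Jacobi identity. -/
structure HomLie3 (K L : Type*) [Field K] [AddCommGroup L] [Module K L] where
  bracket : L → L → L → L
  α : L →ₗ[K] L
  add₁ : ∀ x x' y z, bracket (x + x') y z = bracket x y z + bracket x' y z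
  smul₁ : ∀ (c : K) (x y z : L), bracket (c • x) y z = c • bracket x y z
  add₃ : ∀ x y z z', bracket x y (z + z') = bracket x y z + bracket x y z'
  smul₃ : ∀ (c : K) (x y z : L), bracket x y (c • z) = c • bracket x y z
  skew₁₂ : ∀ x y z, bracket x y z = - bracket y x z
  skew₂₃ : ∀ x y z, bracket x y z = - bracket x z y
  mult : ∀ x y z, α (bracket x y z) = bracket (α x) (α y) (α z)
  jacobi : ∀ a b x y z, bracket (α a) (α b) (bracket x y z) =
    bracket (bracket a b x) (α y) (α z) + bracket (α x) (bracket a b y) (α z)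
      + bracket (α x) (α y) (bracket a b z)

variable {K L V : Type*} [Field K] [AddCommGroup L] [Module K L]
  [AddCommGroup V] [Module K V]

/-- `(V; ρ, β)` is a representation of the 3-Hom-Lie algebra `A`. -/
def IsRep (A : HomLie3 K L) (ρ : L → L → V →ₗ[K] V) (β : V →ₗ[K] V) : Prop :=
  (∀ x x' y, ρ (x + x') y = ρ x y + ρ x' y) ∧
  (∀ (c : K) (x y : L), ρ (c • x) y = c • ρ x y) ∧
  (∀ x y, ρ x y = - ρ y x) ∧
  (∀ x y, (ρ (A.α x) (A.α y)) ∘ₗ β = β ∘ₗ ρ x y) ∧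
  (∀ x y a b, ρ (A.α x) (A.α y) ∘ₗ ρ a b - ρ (A.α a) (A.α b) ∘ₗ ρ x y
      = (ρ (A.bracket x y a) (A.α b) - ρ (A.bracket x y b) (A.α a)) ∘ₗ β) ∧
  (∀ x y a b, ρ (A.bracket x y a) (A.α b) ∘ₗ β - ρ (A.α y) (A.α a) ∘ₗ ρ x b
      = ρ (A.α a) (A.α x) ∘ₗ ρ y b + ρ (A.α x) (A.α y) ∘ₗ ρ a b)

/-- `T : V → L` is an embedding tensor on the 3-Hom-Lie algebra `A` with respect to
the representation `(V; ρ, β)`. -/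
def IsEmbeddingTensor (A : HomLie3 K L) (ρ : L → L → V →ₗ[K] V) (β : V →ₗ[K] V)
    (T : V →ₗ[K] L) : Prop :=
  (∀ v, T (β v) = A.α (T v)) ∧
  (∀ u v w, A.bracket (T u) (T v) (T w) = T (ρ (T u) (T v) w))

/-- The adjoint action `ad(x,y) = [x,y,·]` as a linear endomorphism. -/
def adE (A : HomLie3 K L) (x y : L) : L →ₗ[K] L where
  toFun := A.bracket x y
  map_add' := A.add₃ x y
  map_smul' := fun c z => A.smul₃ c x y z

section Aux

lemma HomLie3.add₂' (A : HomLie3 K L) (x y y' z : L) :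
    A.bracket x (y + y') z = A.bracket x y z + A.bracket x y' z := by
  rw [A.skew₁₂, A.add₁, A.skew₁₂ y, A.skew₁₂ y']; abel

lemma HomLie3.smul₂' (A : HomLie3 K L) (c : K) (x y z : L) :
    A.bracket x (c • y) z = c • A.bracket x y z := by
  rw [A.skew₁₂, A.smul₁, A.skew₁₂ y, smul_neg, neg_neg]

lemma IsRep.add₂' {A : HomLie3 K L} {ρ : L → L → V →ₗ[K] V} {β : V →ₗ[K] V}
    (h : IsRep A ρ β) (x y y' : L) : ρ x (y + y') = ρ x y + ρ x y' := by
  rw [h.2.2.1, h.1, h.2.2.1 y, h.2.2.1 y']; abel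

lemma IsRep.smul₂' {A : HomLie3 K L} {ρ : L → L → V →ₗ[K] V} {β : V →ₗ[K] V}
    (h : IsRep A ρ β) (c : K) (x y : L) : ρ x (c • y) = c • ρ x y := by
  rw [h.2.2.1, h.2.1, h.2.2.1 y, smul_neg, neg_neg]

end Aux

variable [CharZero K]

/-- If `𝔗` generates a linear deformation of the embedding tensor `T`, then `𝔗` is itself
an embedding tensor. -/
theorem generator_isEmbeddingTensor (A : HomLie3 K L)
    (ρ : L → L → V →ₗ[K] V) (β : V →ₗ[K] V) (hrep : IsRep A ρ β)
    (T 𝔗 : V →ₗ[K] L) (hT : IsEmbeddingTensor A ρ β T)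
    (hdef : ∀ t : K, IsEmbeddingTensor A ρ β (T + t • 𝔗)) :
    IsEmbeddingTensor A ρ β 𝔗 := by
  obtain ⟨hT1, hT2⟩ := hT
  constructor
  · intro v
    have h0 := (hdef 1).1 v
    simp only [LinearMap.add_apply, LinearMap.smul_apply, one_smul, map_add, hT1] at h0
    exact add_left_cancel h0
  · intro u v w
    have key : ∀ t : K, A.bracket (T u + t • 𝔗 u) (T v + t • 𝔗 v) (T w + t • 𝔗 w)
        = T ((ρ (T u + t • 𝔗 u) (T v + t • 𝔗 v)) w)
          + t • 𝔗 ((ρ (T u + t • 𝔗 u) (T v + t • 𝔗 v)) w) := by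
      intro t
      have h := (hdef t).2 u v w
      simpa only [LinearMap.add_apply, LinearMap.smul_apply] using h
    have e1 := key 1
    have e2 := key 2
    have e3 := key 3
    simp only [A.add₁, A.add₂' , A.add₃, A.smul₁, A.smul₂', A.smul₃,
      hrep.1, hrep.2.1, hrep.add₂', hrep.smul₂', LinearMap.add_apply,
      LinearMap.smul_apply, map_add, map_smul, smul_smul, smul_add] at e1 e2 e3
    have e0 := hT2 u v w
    linear_combination (norm := module) (-(6:K)⁻¹) • e0 + ((2:K)⁻¹) • e1
      - ((2:K)⁻¹) • e2 + ((6:K)⁻¹) • e3
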